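/- Let X, Y ∈ ℂ^{D×N}. Then for every d ∈ {1,...,D}, √(Σ_{j=d+1}^{D} σ_j(X+Y)²) ≤ √2 √(Σ_{j=d+1}^{D} σ_j(X)²) + √2 ‖Y‖_F. -/

import Mathlib

open Matrix

/-- Frobenius norm of a complex matrix. -/
noncomputable def frob {m n : Type*} [Fintype m] [Fintype n] (M : Matrix m n ℂ) : ℝ :=
  Real.sqrt (∑ i, ∑ j, ‖M i j‖ ^ 2)

/-- `B` is a best rank-`d` approximation of `A` in Frobenius norm. -/
def IsBestRankApprox {m n : Type*} [Fintype m] [Fintype n] (d : ℕ)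
    (A B : Matrix m n ℂ) : Prop :=
  B.rank ≤ d ∧ ∀ C : Matrix m n ℂ, C.rank ≤ d → frob (B - A) ≤ frob (C - A)

/-- The singular values of `M` : nonnegative square roots of the eigenvalues of `M * Mᴴ`
(unsorted enumeration). -/
noncomputable def singVals {D : ℕ} {n : Type*} [Fintype n] (M : Matrix (Fin D) n ℂ) :
    Fin D → ℝ :=
  fun i => Real.sqrt ((Matrix.isHermitian_mul_conjTranspose_self M).eigenvalues i)

/-- `C` is a scaled left-singular-vector form of `M`, i.e. `C = U Σ = M V` for some
SVD `M = U Σ Vᴴ` of `M`: equivalently `C = M V` with `V` unitary and `Cᴴ C` diagonal with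
nonnegative real entries. -/
def IsScaledLeftSV {D : ℕ} {n : Type*} [Fintype n] [DecidableEq n]
    (M C : Matrix (Fin D) n ℂ) : Prop :=
  ∃ V ∈ Matrix.unitaryGroup n ℂ, C = M * V ∧
    ∃ t : n → ℝ, (∀ j, 0 ≤ t j) ∧ Cᴴ * C = Matrix.diagonal (fun j => (t j : ℂ))

/-!
Let `P` be the orthogonal projection onto the eigenvectors of `X Xᴴ` belonging to its trailing
eigenvalues `σ_j(X)²`, `j > d`, so that `‖P X‖_F² = Σ_{j>d} σ_j(X)²`. By the Ky Fan minimum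
principle, `Σ_{j>d} σ_j(X+Y)² ≤ tr((X+Y)(X+Y)ᴴ P) = ‖P (X+Y)‖_F²`, and
`‖P (X+Y)‖_F ≤ ‖P X‖_F + ‖P Y‖_F ≤ ‖P X‖_F + ‖Y‖_F`; so the bound even holds with `1` in place
of `√2`. The Ky Fan step reduces to a rearrangement inequality for the diagonal `c` of `P` in an
eigenbasis of `(X+Y)(X+Y)ᴴ`: `0 ≤ c ≤ 1` and `Σ c = rank P`.
-/

open Finset Matrix Unitary
open scoped ComplexOrder

theorem sum_le_sum_mul_of_threshold {ι : Type*} [Fintype ι] [DecidableEq ι] (t : Finset ι)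
    {μ c : ι → ℝ} {θ : ℝ} (hθ : 0 ≤ θ) (hle : ∀ i ∈ t, μ i ≤ θ) (hge : ∀ i ∉ t, θ ≤ μ i)
    (hc0 : ∀ i, 0 ≤ c i) (hc1 : ∀ i, c i ≤ 1) (hc : (#t : ℝ) ≤ ∑ i, c i) :
    ∑ i ∈ t, μ i ≤ ∑ i, μ i * c i := by
  set χ : ι → ℝ := fun i => if i ∈ t then 1 else 0
  have hχμ : ∑ i ∈ t, μ i = ∑ i, μ i * χ i := by simp [χ, Finset.sum_ite_mem]
  have hχ : (#t : ℝ) = ∑ i, χ i := by simp [χ]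
  -- `(μ i - θ) * (c i - χ i) ≥ 0`: on `t` both factors are `≤ 0`, off `t` both are `≥ 0`
  have key : ∀ i, θ * (c i - χ i) ≤ μ i * c i - μ i * χ i := fun i => by
    by_cases hi : i ∈ t
    · nlinarith [hle i hi, hc1 i, show χ i = 1 from if_pos hi]
    · nlinarith [hge i hi, hc0 i, show χ i = 0 from if_neg hi]
  have hsum := Finset.sum_le_sum fun i (_ : i ∈ univ) => key i
  rw [← Finset.mul_sum, Finset.sum_sub_distrib, Finset.sum_sub_distrib, ← hχ, ← hχμ] at hsum
  linarith [mul_nonneg hθ (sub_nonneg.mpr hc)]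

theorem Antitone.exists_threshold {D : ℕ} {m : Fin D → ℝ} (hm : Antitone m) (hm0 : ∀ i, 0 ≤ m i)
    (d : ℕ) : ∃ θ, 0 ≤ θ ∧ (∀ i : Fin D, (i : ℕ) < d → θ ≤ m i) ∧
      ∀ i : Fin D, d ≤ (i : ℕ) → m i ≤ θ := by
  by_cases hd : d < D
  · exact ⟨m ⟨d, hd⟩, hm0 _, fun i hi => hm (Fin.mk_le_mk.mpr hi.le),
      fun i hi => hm (Fin.mk_le_mk.mpr hi)⟩
  · exact ⟨0, le_rfl, fun i _ => hm0 i, fun i hi => absurd i.2 (by omega)⟩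

section Frobenius

attribute [local instance] frobeniusNormedAddCommGroup

variable {m n : Type*} [Fintype m] [Fintype n]

theorem frob_eq_norm (M : Matrix m n ℂ) : frob M = ‖M‖ := by
  rw [frob, frobenius_norm_def, Real.sqrt_eq_rpow]
  simp_rw [Real.rpow_two]

theorem frob_add_le (M M' : Matrix m n ℂ) : frob (M + M') ≤ frob M + frob M' := by
  simpa only [frob_eq_norm] using norm_add_le M M'

end Frobenius

variable {m n : Type*} [Fintype m] [Fintype n]

theorem frob_nonneg (M : Matrix m n ℂ) : 0 ≤ frob M := Real.sqrt_nonneg _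

theorem frob_sq (M : Matrix m n ℂ) : frob M ^ 2 = (M * Mᴴ).trace.re := by
  rw [frob, Real.sq_sqrt (by positivity)]
  simp only [trace, Matrix.diag, mul_apply, conjTranspose_apply, Complex.re_sum]
  refine Finset.sum_congr rfl fun i _ => Finset.sum_congr rfl fun j _ => ?_
  rw [← Complex.normSq_eq_norm_sq, Complex.star_def, Complex.mul_conj, Complex.ofReal_re]

theorem singVals_nonneg {D : ℕ} (M : Matrix (Fin D) n ℂ) (i : Fin D) : 0 ≤ singVals M i :=
  Real.sqrt_nonneg _

theorem singVals_sq {D : ℕ} (M : Matrix (Fin D) n ℂ) (i : Fin D) :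
    singVals M i ^ 2 = (isHermitian_mul_conjTranspose_self M).eigenvalues i :=
  Real.sq_sqrt (eigenvalues_self_mul_conjTranspose_nonneg M i)

section StarProjection

variable {Q : Matrix m m ℂ} (hQ : IsStarProjection Q)
include hQ

theorem IsStarProjection.frob_sq_mul (M : Matrix m n ℂ) :
    frob (Q * M) ^ 2 = (M * Mᴴ * Q).trace.re := by
  have hQh : Qᴴ = Q := hQ.isSelfAdjoint
  rw [frob_sq, conjTranspose_mul, hQh,
    show Q * M * (Mᴴ * Q) = Q * (M * Mᴴ * Q) by simp only [Matrix.mul_assoc], trace_mul_comm,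
    Matrix.mul_assoc, hQ.isIdempotentElem.eq]

theorem IsStarProjection.frob_mul_le [DecidableEq m] (M : Matrix m n ℂ) :
    frob (Q * M) ≤ frob M := by
  have hsplit : frob (Q * M) ^ 2 + frob ((1 - Q) * M) ^ 2 = frob M ^ 2 := by
    rw [hQ.frob_sq_mul, hQ.one_sub.frob_sq_mul, frob_sq, ← Complex.add_re, ← trace_add,
      ← Matrix.mul_add, add_sub_cancel, Matrix.mul_one]
  exact (sq_le_sq₀ (frob_nonneg _) (frob_nonneg _)).mp
    (by nlinarith [sq_nonneg (frob ((1 - Q) * M))])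

theorem IsStarProjection.re_diag_nonneg (j : m) : 0 ≤ (Q j j).re := by
  have hQh : Qᴴ * Q = Q := by rw [show Qᴴ = Q from hQ.isSelfAdjoint, hQ.isIdempotentElem.eq]
  have := (posSemidef_conjTranspose_mul_self Q).diag_nonneg (i := j)
  rw [hQh] at this
  exact (Complex.nonneg_iff.mp this).1

theorem IsStarProjection.re_diag_le_one [DecidableEq m] (j : m) : (Q j j).re ≤ 1 := by
  have := hQ.one_sub.re_diag_nonneg j
  simp only [Matrix.sub_apply, one_apply_eq, Complex.sub_re, Complex.one_re] at this
  linarith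

end StarProjection

variable [DecidableEq n]

theorem Matrix.trace_conjStarAlgAut {R : Type*} [CommRing R] [StarRing R]
    (u : unitary (Matrix n n R)) (M : Matrix n n R) :
    (conjStarAlgAut R _ u M).trace = M.trace := by
  rw [conjStarAlgAut_apply, trace_mul_cycle, coe_star_mul_self, Matrix.one_mul]

theorem Matrix.isStarProjection_diagonal_indicator {R : Type*} [Semiring R] [StarRing R]
    (s : Finset n) : IsStarProjection (diagonal fun j => if j ∈ s then (1 : R) else 0) := by
  refine ⟨?_, ?_⟩
  · rw [IsIdempotentElem, diagonal_mul_diagonal]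
    congr 1
    ext j
    by_cases hj : j ∈ s <;> simp [hj]
  · rw [IsSelfAdjoint, star_eq_conjTranspose, diagonal_conjTranspose]
    congr 1
    ext j
    by_cases hj : j ∈ s <;> simp [hj]

namespace Matrix.IsHermitian

variable {A : Matrix n n ℂ} (hA : A.IsHermitian)

noncomputable def spectralProj (s : Finset n) : Matrix n n ℂ :=
  conjStarAlgAut ℂ _ hA.eigenvectorUnitary (diagonal fun j => if j ∈ s then 1 else 0)

theorem isStarProjection_spectralProj (s : Finset n) : IsStarProjection (hA.spectralProj s) :=
  (isStarProjection_diagonal_indicator s).map _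

theorem re_trace_spectralProj (s : Finset n) : (hA.spectralProj s).trace.re = #s := by
  rw [spectralProj, trace_conjStarAlgAut, trace_diagonal]
  simp

theorem re_trace_mul_spectralProj (s : Finset n) :
    (A * hA.spectralProj s).trace.re = ∑ j ∈ s, hA.eigenvalues j := by
  have hconj : A * hA.spectralProj s = conjStarAlgAut ℂ _ hA.eigenvectorUnitary
      (diagonal (RCLike.ofReal ∘ hA.eigenvalues) * diagonal fun j => if j ∈ s then 1 else 0) := by
    rw [spectralProj, map_mul, ← hA.spectral_theorem]
  rw [hconj, trace_conjStarAlgAut, diagonal_mul_diagonal, trace_diagonal, Complex.re_sum]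
  simp [apply_ite Complex.re, Finset.sum_ite_mem]

/-- `c j` is the diagonal entry of `Q` in the eigenbasis of `A`. -/
theorem exists_re_trace_mul_eq_sum {Q : Matrix n n ℂ} (hQ : IsStarProjection Q) :
    ∃ c : n → ℝ, (∀ j, 0 ≤ c j) ∧ (∀ j, c j ≤ 1) ∧ ∑ j, c j = Q.trace.re ∧
      (A * Q).trace.re = ∑ j, hA.eigenvalues j * c j := by
  set Q' := conjStarAlgAut ℂ _ (star hA.eigenvectorUnitary) Q
  have hQ' : IsStarProjection Q' := hQ.map _
  refine ⟨fun j => (Q' j j).re, hQ'.re_diag_nonneg, hQ'.re_diag_le_one, ?_, ?_⟩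
  · rw [← Complex.re_sum]
    exact congrArg Complex.re (trace_conjStarAlgAut _ Q)
  · rw [← trace_conjStarAlgAut (star hA.eigenvectorUnitary), map_mul,
      conjStarAlgAut_star_eigenvectorUnitary, Matrix.trace, Complex.re_sum]
    simp [diagonal_mul, Q']

theorem sum_tail_eigenvalues_le_re_trace_mul {D : ℕ} (hA0 : ∀ j, 0 ≤ hA.eigenvalues j)
    (f : Fin D ≃ n) (hf : Antitone (hA.eigenvalues ∘ f)) (d : ℕ) {Q : Matrix n n ℂ}
    (hQ : IsStarProjection Q)
    (htr : (#(univ.filter fun i : Fin D => d ≤ (i : ℕ)) : ℝ) ≤ Q.trace.re) :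
    ∑ i ∈ univ.filter (fun i : Fin D => d ≤ (i : ℕ)), hA.eigenvalues (f i) ≤
      (A * Q).trace.re := by
  obtain ⟨c, hc0, hc1, hcsum, htrace⟩ := hA.exists_re_trace_mul_eq_sum hQ
  obtain ⟨θ, hθ, hθle, hθge⟩ := hf.exists_threshold (fun i => hA0 _) d
  rw [htrace, ← Equiv.sum_comp f]
  refine sum_le_sum_mul_of_threshold _ hθ (fun i hi => hθge i (by simpa using hi))
    (fun i hi => hθle i (by simpa using hi)) (fun i => hc0 _) (fun i => hc1 _) ?_
  rwa [Equiv.sum_comp f c, hcsum]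

end Matrix.IsHermitian

theorem stmt9_general {D N : ℕ} (d : ℕ)
    (X Y : Matrix (Fin D) (Fin N) ℂ)
    (σX σXY : Fin D → ℝ) (hσXY : Antitone σXY)
    (hX : ∃ e : Equiv.Perm (Fin D), σX = singVals X ∘ e)
    (hXY : ∃ e : Equiv.Perm (Fin D), σXY = singVals (X + Y) ∘ e) :
    Real.sqrt (∑ i ∈ Finset.univ.filter (fun i : Fin D => d ≤ (i : ℕ)), σXY i ^ 2) ≤
      Real.sqrt 2 * Real.sqrt (∑ i ∈ Finset.univ.filter (fun i : Fin D => d ≤ (i : ℕ)), σX i ^ 2)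
        + Real.sqrt 2 * frob Y := by
  obtain ⟨e, rfl⟩ := hX
  obtain ⟨f, rfl⟩ := hXY
  set tail := univ.filter fun i : Fin D => d ≤ (i : ℕ)
  set hA := isHermitian_mul_conjTranspose_self X
  set P := hA.spectralProj (tail.map e.toEmbedding)
  have hP : IsStarProjection P := hA.isStarProjection_spectralProj _
  have hXtail : frob (P * X) = √(∑ i ∈ tail, (singVals X ∘ e) i ^ 2) := by
    rw [← Real.sqrt_sq (frob_nonneg _), hP.frob_sq_mul, hA.re_trace_mul_spectralProj, sum_map]
    simp only [Function.comp_apply, singVals_sq, Equiv.coe_toEmbedding]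
  have hXYtail : √(∑ i ∈ tail, (singVals (X + Y) ∘ f) i ^ 2) ≤ frob (P * (X + Y)) := by
    rw [Real.sqrt_le_left (frob_nonneg _), hP.frob_sq_mul]
    simp only [Function.comp_apply, singVals_sq]
    refine (isHermitian_mul_conjTranspose_self (X + Y)).sum_tail_eigenvalues_le_re_trace_mul
      (eigenvalues_self_mul_conjTranspose_nonneg _) f (fun i j hij => ?_) d hP ?_
    · simpa only [Function.comp_apply, singVals_sq] using
        pow_le_pow_left₀ (singVals_nonneg _ _) (hσXY hij) 2
    · rw [hA.re_trace_spectralProj, card_map]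
  calc √(∑ i ∈ tail, (singVals (X + Y) ∘ f) i ^ 2) ≤ frob (P * (X + Y)) := hXYtail
    _ ≤ frob (P * X) + frob Y := by
      rw [Matrix.mul_add]
      grw [frob_add_le, hP.frob_mul_le Y]
    _ ≤ √2 * √(∑ i ∈ tail, (singVals X ∘ e) i ^ 2) + √2 * frob Y := by
      rw [hXtail]
      nlinarith [Real.one_lt_sqrt_two, frob_nonneg Y,
        Real.sqrt_nonneg (∑ i ∈ tail, (singVals X ∘ e) i ^ 2)]

/-- For `X, Y ∈ ℂ^{D×N}` and every `d ∈ {1,...,D}`: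
`√(Σ_{j=d+1}^D σ_j(X+Y)²) ≤ √2 √(Σ_{j=d+1}^D σ_j(X)²) + √2 ‖Y‖_F`. -/
theorem stmt9 {D N : ℕ} (d : ℕ) (hd1 : 1 ≤ d) (hdD : d ≤ D)
    (X Y : Matrix (Fin D) (Fin N) ℂ)
    (σX σXY : Fin D → ℝ) (hσX : Antitone σX) (hσXY : Antitone σXY)
    (hX : ∃ e : Equiv.Perm (Fin D), σX = singVals X ∘ e)
    (hXY : ∃ e : Equiv.Perm (Fin D), σXY = singVals (X + Y) ∘ e) :
    Real.sqrt (∑ i ∈ Finset.univ.filter (fun i : Fin D => d ≤ (i : ℕ)), σXY i ^ 2) ≤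
      Real.sqrt 2 * Real.sqrt (∑ i ∈ Finset.univ.filter (fun i : Fin D => d ≤ (i : ℕ)), σX i ^ 2)
        + Real.sqrt 2 * frob Y :=
  stmt9_general d X Y σX σXY hσXY hX hXY
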